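/- Let d ≥ 1 and define 𝓘_d(s) = −∫_0^∞ (e^{−s²t} e^{−2dt} I_0(2t)^d − e^{−t}) dt/t for real s ≥ 0. Then for every s ≥ 0 one has 𝓘_d(s) = log(s² + 2d) − ∫_0^∞ e^{−s²t} e^{−2dt} (I_0(2t)^d − 1) dt/t, and 𝓘_d(s) − log(s²) → 0 as s → +∞. -/

import Mathlib

open MeasureTheory Real Filter

/-- The modified `I`-Bessel function of integer order `x`, via its integral
representation `I_x(t) = (1/π) ∫_0^π e^{t cos θ} cos(xθ) dθ`. -/
noncomputable def besselI (x : ℤ) (t : ℝ) : ℝ :=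
  (1 / Real.pi) * ∫ θ in (0:ℝ)..Real.pi, Real.exp (t * Real.cos θ) * Real.cos ((x : ℝ) * θ)

/-- The function `𝓘_d(s) = -∫_0^∞ (e^{-s²t} e^{-2dt} I_0(2t)^d - e^{-t}) dt/t`. -/
noncomputable def mathcalI (d : ℕ) (s : ℝ) : ℝ :=
  -∫ t in Set.Ioi (0:ℝ),
    (Real.exp (-s ^ 2 * t) * Real.exp (-(2 * d * t)) * (besselI 0 (2 * t)) ^ d
      - Real.exp (-t)) / t

/-!
The integrand of `𝓘_d(s)` splits as `e^{-s²t} e^{-2dt} (I₀(2t)^d - 1) / t` minus the Frullani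
integrand `(e^{-t} - e^{-(s²+2d)t}) / t`, whose integral is `log (s² + 2d)`. The first part is
integrable: the kernel `e^{-2dt} (I₀(2t)^d - 1) / t` is at most `2d`, and since
`cos θ ≤ 1 - 2θ²/π²` on `[0, π]` a Gaussian integral gives `e^{-2t} I₀(2t) = O(t^{-1/2})`, so the
kernel is `O(t^{-3/2})`. Dominated convergence then sends its integral against `e^{-s²t}` to `0`
as `s → ∞`, while `log (s² + 2d) - log s² → 0`.
-/

open Set

lemma continuous_besselI (n : ℤ) : Continuous (besselI n) := by
  unfold besselI
  fun_prop

lemma besselI_zero_eq (x : ℝ) :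
    besselI 0 x = π⁻¹ * ∫ θ in (0:ℝ)..π, exp (x * cos θ) := by
  simp [besselI]

lemma one_le_besselI_zero (x : ℝ) : 1 ≤ besselI 0 x := by
  have hlin : ∫ θ in (0:ℝ)..π, (1 + x * cos θ) = π := by
    rw [intervalIntegral.integral_add intervalIntegrable_const
      (Continuous.intervalIntegrable (by fun_prop) _ _)]
    simp [integral_cos]
  have hmono : ∫ θ in (0:ℝ)..π, (1 + x * cos θ) ≤ ∫ θ in (0:ℝ)..π, exp (x * cos θ) :=
    intervalIntegral.integral_mono_on pi_pos.le
      (Continuous.intervalIntegrable (by fun_prop) _ _)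
      (Continuous.intervalIntegrable (by fun_prop) _ _)
      fun θ _ => by linarith [add_one_le_exp (x * cos θ)]
  rw [besselI_zero_eq, ← inv_mul_cancel₀ pi_pos.ne']
  gcongr
  linarith

lemma besselI_zero_le_exp {x : ℝ} (hx : 0 ≤ x) : besselI 0 x ≤ exp x := by
  have hmono : ∫ θ in (0:ℝ)..π, exp (x * cos θ) ≤ ∫ θ in (0:ℝ)..π, exp x :=
    intervalIntegral.integral_mono_on pi_pos.le
      (Continuous.intervalIntegrable (by fun_prop) _ _) intervalIntegrable_const
      fun θ _ => exp_le_exp.2 (mul_le_of_le_one_right hx (cos_le_one θ))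
  rw [intervalIntegral.integral_const, smul_eq_mul, sub_zero] at hmono
  calc besselI 0 x ≤ π⁻¹ * (π * exp x) := by rw [besselI_zero_eq]; gcongr
    _ = exp x := by field_simp

lemma besselI_zero_le_exp_mul_sqrt {x : ℝ} (hx : 0 < x) :
    besselI 0 x ≤ exp x * √(π / (8 * x)) := by
  set b := 2 * x / π ^ 2
  have hb : 0 < b := by positivity
  have hpoint : ∀ θ ∈ Icc (0:ℝ) π, exp (x * cos θ) ≤ exp x * exp (-b * θ ^ 2) := by
    intro θ hθ
    have hcos : cos θ ≤ 1 - 2 / π ^ 2 * θ ^ 2 :=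
      cos_le_one_sub_mul_cos_sq (by rw [abs_of_nonneg hθ.1]; exact hθ.2)
    rw [← exp_add]
    apply exp_le_exp.2
    have := mul_le_mul_of_nonneg_left hcos hx.le
    have e : x * (1 - 2 / π ^ 2 * θ ^ 2) = x + -b * θ ^ 2 := by ring
    linarith
  have htail : ∫ θ in (0:ℝ)..π, exp (-b * θ ^ 2) ≤ √(π / b) / 2 := by
    rw [← integral_gaussian_Ioi, intervalIntegral.integral_of_le pi_pos.le]
    exact setIntegral_mono_set (integrable_exp_neg_mul_sq hb).integrableOn
      (.of_forall fun θ => (exp_pos _).le) Ioc_subset_Ioi_self.eventuallyLE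
  have hconst : √(π / b) / 2 = π * √(π / (8 * x)) := by
    rw [show π / b = (2 * π) ^ 2 * (π / (8 * x)) by simp only [b]; field_simp; ring,
      sqrt_mul (by positivity), sqrt_sq (by positivity)]
    ring
  calc besselI 0 x ≤ π⁻¹ * ∫ θ in (0:ℝ)..π, exp x * exp (-b * θ ^ 2) := by
        rw [besselI_zero_eq]
        gcongr
        exact intervalIntegral.integral_mono_on pi_pos.le
          (Continuous.intervalIntegrable (by fun_prop) _ _)
          (Continuous.intervalIntegrable (by fun_prop) _ _) hpoint
    _ ≤ π⁻¹ * (exp x * (π * √(π / (8 * x)))) := by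
        rw [intervalIntegral.integral_const_mul, ← hconst]
        gcongr
    _ = exp x * √(π / (8 * x)) := by field_simp

lemma exp_neg_mul_besselI_zero_le_one {x : ℝ} (hx : 0 ≤ x) :
    exp (-x) * besselI 0 x ≤ 1 := by
  calc exp (-x) * besselI 0 x ≤ exp (-x) * exp x := by gcongr; exact besselI_zero_le_exp hx
    _ = 1 := by rw [← exp_add, neg_add_cancel, exp_zero]

lemma exp_neg_mul_besselI_zero_le_sqrt {x : ℝ} (hx : 0 < x) :
    exp (-x) * besselI 0 x ≤ √(π / (8 * x)) := by
  calc exp (-x) * besselI 0 x ≤ exp (-x) * (exp x * √(π / (8 * x))) := by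
        gcongr; exact besselI_zero_le_exp_mul_sqrt hx
    _ = √(π / (8 * x)) := by rw [← mul_assoc, ← exp_add, neg_add_cancel, exp_zero, one_mul]

noncomputable def besselExcess (d : ℕ) (t : ℝ) : ℝ :=
  exp (-(2 * d * t)) * (besselI 0 (2 * t) ^ d - 1) / t

lemma besselExcess_eq (d : ℕ) (t : ℝ) :
    besselExcess d t =
      ((exp (-(2 * t)) * besselI 0 (2 * t)) ^ d - exp (-(2 * d * t))) / t := by
  rw [besselExcess, mul_pow, ← exp_nat_mul]
  ring_nf

lemma besselExcess_nonneg (d : ℕ) {t : ℝ} (ht : 0 ≤ t) : 0 ≤ besselExcess d t := by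
  have := one_le_pow₀ (n := d) (one_le_besselI_zero (2 * t))
  unfold besselExcess
  have : 0 ≤ besselI 0 (2 * t) ^ d - 1 := by linarith
  positivity

lemma besselExcess_le (d : ℕ) {t : ℝ} (ht : 0 < t) : besselExcess d t ≤ 2 * d := by
  have hI := one_le_besselI_zero (2 * t)
  have hpow : (exp (-(2 * t)) * besselI 0 (2 * t)) ^ d ≤ 1 :=
    pow_le_one₀ (by positivity) (exp_neg_mul_besselI_zero_le_one (by positivity))
  rw [besselExcess_eq, div_le_iff₀ ht]
  linarith [add_one_le_exp (-(2 * d * t))]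

lemma besselExcess_le_rpow {d : ℕ} (hd : 1 ≤ d) {t : ℝ} (ht : 0 < t) :
    besselExcess d t ≤ √π / 4 * t ^ (-(3 / 2) : ℝ) := by
  set c := exp (-(2 * t)) * besselI 0 (2 * t)
  have hI := one_le_besselI_zero (2 * t)
  have hc0 : 0 ≤ c := by positivity
  have hc1 : c ≤ 1 := exp_neg_mul_besselI_zero_le_one (by positivity)
  have hsqrt : √(π / (8 * (2 * t))) = √π / 4 * t ^ (-(1 / 2) : ℝ) := by
    rw [rpow_neg ht.le, ← sqrt_eq_rpow, show 8 * (2 * t) = 4 ^ 2 * t by ring,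
      sqrt_div pi_pos.le, sqrt_mul (by positivity), sqrt_sq (by positivity)]
    field_simp
  have hnum : c ^ d - exp (-(2 * d * t)) ≤ √π / 4 * t ^ (-(1 / 2) : ℝ) :=
    calc c ^ d - exp (-(2 * d * t)) ≤ c := by
          linarith [pow_le_of_le_one hc0 hc1 (by omega : d ≠ 0), exp_pos (-(2 * d * t))]
      _ ≤ _ := hsqrt ▸ exp_neg_mul_besselI_zero_le_sqrt (by positivity)
  rw [besselExcess_eq, show (-(3 / 2) : ℝ) = -(1 / 2) - 1 by norm_num, rpow_sub_one ht.ne',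
    mul_div_assoc']
  gcongr

lemma integrableOn_besselExcess {d : ℕ} (hd : 1 ≤ d) :
    IntegrableOn (besselExcess d) (Ioi 0) := by
  have hcont : ContinuousOn (besselExcess d) (Ioi 0) := by
    have := continuous_besselI 0
    unfold besselExcess
    exact ContinuousOn.div (by fun_prop) continuousOn_id fun t ht => ht.ne'
  rw [← Ioc_union_Ioi_eq_Ioi zero_le_one]
  refine IntegrableOn.union ?_ ?_
  · refine Integrable.mono' (integrable_const (2 * (d : ℝ))) ?_ ?_
    · exact (hcont.mono Ioc_subset_Ioi_self).aestronglyMeasurable measurableSet_Ioc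
    · refine (ae_restrict_iff' measurableSet_Ioc).2 (.of_forall fun t ht => ?_)
      rw [norm_of_nonneg (besselExcess_nonneg d ht.1.le)]
      exact besselExcess_le d ht.1
  · have hdecay := integrableOn_Ioi_rpow_of_lt (by norm_num : (-(3 / 2) : ℝ) < -1) one_pos
    refine Integrable.mono' (hdecay.const_mul (√π / 4)) ?_ ?_
    · exact (hcont.mono (Ioi_subset_Ioi zero_le_one)).aestronglyMeasurable measurableSet_Ioi
    · refine (ae_restrict_iff' measurableSet_Ioi).2 (.of_forall fun t ht => ?_)
      have ht0 : 0 < t := zero_lt_one.trans ht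
      rw [norm_of_nonneg (besselExcess_nonneg d ht0.le)]
      exact besselExcess_le_rpow hd ht0

lemma exp_neg_sub_exp_neg_mul_div_mem_Icc {a t : ℝ} (ha : 1 ≤ a) (ht : 0 < t) :
    (exp (-t) - exp (-(a * t))) / t ∈ Icc 0 ((a - 1) * exp (-t)) := by
  have hsplit : exp (-t) - exp (-(a * t)) = exp (-t) * (1 - exp (-((a - 1) * t))) := by
    rw [mul_sub, ← exp_add]; ring_nf
  have h1 : 0 ≤ 1 - exp (-((a - 1) * t)) := by
    rw [sub_nonneg, exp_le_one_iff, neg_nonpos]; nlinarith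
  have h2 : 1 - exp (-((a - 1) * t)) ≤ (a - 1) * t := by
    linarith [add_one_le_exp (-((a - 1) * t))]
  rw [hsplit]
  constructor
  · positivity
  · rw [div_le_iff₀ ht]
    calc exp (-t) * (1 - exp (-((a - 1) * t))) ≤ exp (-t) * ((a - 1) * t) := by gcongr
      _ = _ := by ring

lemma integrableOn_exp_neg_sub_exp_neg_mul_div {a : ℝ} (ha : 1 ≤ a) :
    IntegrableOn (fun t => (exp (-t) - exp (-(a * t))) / t) (Ioi 0) := by
  refine Integrable.mono' ((exp_neg_integrableOn_Ioi 0 zero_lt_one).const_mul (a - 1)) ?_ ?_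
  · exact (ContinuousOn.div (by fun_prop) continuousOn_id fun t ht => ht.ne').aestronglyMeasurable
      measurableSet_Ioi
  · refine (ae_restrict_iff' measurableSet_Ioi).2 (.of_forall fun t ht => ?_)
    obtain ⟨h0, h1⟩ := exp_neg_sub_exp_neg_mul_div_mem_Icc ha ht
    rw [norm_of_nonneg h0]
    simpa using h1

lemma integral_exp_neg_sub_exp_neg_mul_div {a : ℝ} (ha : 1 ≤ a) :
    ∫ t in Ioi 0, (exp (-t) - exp (-(a * t))) / t = log a := by
  have h := Frullani.integral_Ioi_eq (f := fun t => exp (-t)) (a := 1) (b := a) (L := 1) (R := 0)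
    (ContinuousOn.locallyIntegrableOn (by fun_prop) measurableSet_Ioi) one_pos (by linarith)
    ?_ ?_ ?_
  · simpa [div_eq_inv_mul] using h
  · exact ((continuous_exp.comp continuous_neg).tendsto' 0 1 (by simp)).mono_left
      nhdsWithin_le_nhds
  · exact tendsto_exp_neg_atTop_nhds_zero
  · simpa [div_eq_inv_mul] using integrableOn_exp_neg_sub_exp_neg_mul_div ha

lemma tendsto_log_add_sub_log_atTop (c : ℝ) :
    Tendsto (fun x : ℝ => log (x + c) - log x) atTop (nhds 0) := by
  have hratio : Tendsto (fun x : ℝ => 1 + c / x) atTop (nhds (1 + 0)) :=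
    tendsto_const_nhds.add (tendsto_const_nhds.div_atTop tendsto_id)
  rw [add_zero] at hratio
  refine (log_one ▸ hratio.log one_ne_zero).congr' ?_
  filter_upwards [eventually_gt_atTop 0, eventually_gt_atTop (-c)] with x hx hxc
  rw [← log_div (by linarith) hx.ne', add_div, div_self hx.ne']

lemma norm_exp_neg_sq_mul_le_one (s : ℝ) {t : ℝ} (ht : 0 ≤ t) : ‖exp (-s ^ 2 * t)‖ ≤ 1 := by
  rw [norm_of_nonneg (exp_pos _).le, exp_le_one_iff]
  nlinarith [sq_nonneg s]

lemma integrableOn_exp_neg_sq_mul {g : ℝ → ℝ} (hg : IntegrableOn g (Ioi 0)) (s : ℝ) :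
    IntegrableOn (fun t => exp (-s ^ 2 * t) * g t) (Ioi 0) :=
  hg.bdd_mul (Continuous.aestronglyMeasurable (by fun_prop))
    ((ae_restrict_iff' measurableSet_Ioi).2
      (.of_forall fun _ ht => norm_exp_neg_sq_mul_le_one s (le_of_lt ht)))

lemma tendsto_setIntegral_exp_neg_sq_mul_atTop {g : ℝ → ℝ} (hg : IntegrableOn g (Ioi 0)) :
    Tendsto (fun s : ℝ => ∫ t in Ioi 0, exp (-s ^ 2 * t) * g t) atTop (nhds 0) := by
  have hbound (s : ℝ) :
      ∀ᵐ t ∂(volume.restrict (Ioi 0)), ‖exp (-s ^ 2 * t) * g t‖ ≤ ‖g t‖ := by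
    refine (ae_restrict_iff' measurableSet_Ioi).2 (.of_forall fun t ht => ?_)
    rw [norm_mul]
    exact mul_le_of_le_one_left (norm_nonneg _) (norm_exp_neg_sq_mul_le_one s (le_of_lt ht))
  have hpointwise : ∀ᵐ t ∂(volume.restrict (Ioi 0)),
      Tendsto (fun s : ℝ => exp (-s ^ 2 * t) * g t) atTop (nhds 0) := by
    refine (ae_restrict_iff' measurableSet_Ioi).2 (.of_forall fun t ht => ?_)
    have : Tendsto (fun s : ℝ => -s ^ 2 * t) atTop atBot := by
      simpa [neg_mul] using (tendsto_pow_atTop two_ne_zero).atTop_mul_const (mem_Ioi.1 ht)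
    simpa using (tendsto_exp_atBot.comp this).mul_const (g t)
  simpa using tendsto_integral_filter_of_dominated_convergence _
    (.of_forall fun s => (integrableOn_exp_neg_sq_mul hg s).aestronglyMeasurable)
    (.of_forall hbound) hg.norm hpointwise

lemma mathcalI_eq {d : ℕ} (hd : 1 ≤ d) (s : ℝ) :
    mathcalI d s = log (s ^ 2 + 2 * d) - ∫ t in Ioi 0, exp (-s ^ 2 * t) * besselExcess d t := by
  have ha : 1 ≤ s ^ 2 + 2 * d := by
    have : (1 : ℝ) ≤ d := by exact_mod_cast hd
    nlinarith [sq_nonneg s]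
  have hsplit : (fun t => (exp (-s ^ 2 * t) * exp (-(2 * d * t)) * besselI 0 (2 * t) ^ d
      - exp (-t)) / t) = fun t => exp (-s ^ 2 * t) * besselExcess d t
        - (exp (-t) - exp (-((s ^ 2 + 2 * d) * t))) / t := by
    funext t
    rw [besselExcess, show -((s ^ 2 + 2 * d) * t) = -s ^ 2 * t + -(2 * d * t) by ring, exp_add]
    ring
  rw [mathcalI, hsplit, integral_sub (integrableOn_exp_neg_sq_mul (integrableOn_besselExcess hd) s)
    (integrableOn_exp_neg_sub_exp_neg_mul_div ha), integral_exp_neg_sub_exp_neg_mul_div ha]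
  ring

/-- An alternate expression for `𝓘_d(s)` and its asymptotic behavior `𝓘_d(s) = log s² + o(1)`
as `s → +∞`. -/
theorem mathcalI_eq_and_asymptotic (d : ℕ) (hd : 1 ≤ d) :
    (∀ s : ℝ, 0 ≤ s →
      mathcalI d s
        = Real.log (s ^ 2 + 2 * d) -
            ∫ t in Set.Ioi (0:ℝ),
              Real.exp (-s ^ 2 * t) * Real.exp (-(2 * d * t)) *
                ((besselI 0 (2 * t)) ^ d - 1) / t) ∧
    Filter.Tendsto (fun s : ℝ => mathcalI d s - Real.log (s ^ 2)) Filter.atTop (nhds 0) := by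
  refine ⟨fun s _ => ?_, ?_⟩
  · simp_rw [mathcalI_eq hd, besselExcess, mul_div_assoc, mul_assoc]
  have h := ((tendsto_log_add_sub_log_atTop (2 * d)).comp (tendsto_pow_atTop two_ne_zero)).sub
    (tendsto_setIntegral_exp_neg_sq_mul_atTop (integrableOn_besselExcess hd))
  rw [sub_zero] at h
  refine h.congr fun s => ?_
  simp only [Function.comp_apply, mathcalI_eq hd]
  ring
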